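/- arXiv:1804.04650 — 2 statements merged into one kernel-verified Lean document; each statement's English description precedes it below -/
import Mathlib

section
/- Let v^1,…,v^n ∈ ℝ^d be vectors such that max_{i,j}|v^i − v^j| ≥ 1/√n. Then the index set {1,…,n} can be partitioned into two nonempty sets N1 and N2 such that |v^ℓ − v^k| ≥ 1/(√n (n−1)) for all ℓ ∈ N1 and k ∈ N2. -/
theorem partition_velocities (d n : ℕ) (hn : 2 ≤ n)
    (v : Fin n → EuclideanSpace ℝ (Fin d))
    (hmax : ∃ i j : Fin n, ‖v i - v j‖ ≥ 1 / Real.sqrt n) :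
    ∃ N1 N2 : Finset (Fin n), N1.Nonempty ∧ N2.Nonempty ∧
      Disjoint N1 N2 ∧ N1 ∪ N2 = Finset.univ ∧
      ∀ l ∈ N1, ∀ k ∈ N2, ‖v l - v k‖ ≥ 1 / (Real.sqrt n * (n - 1)) := by
  obtain ⟨i, j, hij⟩ := hmax
  set c : ℝ := 1 / (Real.sqrt n * ((n : ℝ) - 1)) with hc
  have hn2 : (2 : ℝ) ≤ (n : ℝ) := by exact_mod_cast hn
  have hn1 : (1 : ℝ) ≤ (n : ℝ) - 1 := by linarith
  have hs : 0 < Real.sqrt n := Real.sqrt_pos.mpr (by linarith)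
  have hcpos : 0 < c := by
    rw [hc]; exact div_pos one_pos (mul_pos hs (by linarith))
  have key : 1 / Real.sqrt n = ((n : ℝ) - 1) * c := by
    rw [hc]; field_simp
  set r : Fin n → ℝ := fun k => ‖v k - v i‖ with hr
  have hri : r i = 0 := by simp [hr]
  have hrj : r j ≥ ((n : ℝ) - 1) * c := by
    rw [← key]
    calc r j = ‖v i - v j‖ := by rw [hr]; exact norm_sub_rev _ _
    _ ≥ 1 / Real.sqrt n := hij
  by_cases hgap : ∃ m : ℕ, m < n - 1 ∧
      ∀ k, ¬ ((m : ℝ) * c < r k ∧ r k < ((m : ℝ) + 1) * c)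
  · obtain ⟨m, hm, hno⟩ := hgap
    have hmlt : (m : ℝ) < (n : ℝ) - 1 := by
      have : m + 2 ≤ n := by omega
      have := (Nat.cast_le (α := ℝ)).mpr this
      push_cast at this; linarith
    refine ⟨Finset.univ.filter (fun k => r k ≤ (m : ℝ) * c),
      Finset.univ.filter (fun k => ¬ r k ≤ (m : ℝ) * c), ?_, ?_, ?_, ?_, ?_⟩
    · exact ⟨i, by simp [hri]; positivity⟩
    · refine ⟨j, by simp; nlinarith⟩
    · simp [Finset.disjoint_left]
    · exact Finset.filter_union_filter_not_eq _ _
    · intro l hl k hk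
      simp only [Finset.mem_filter] at hl hk
      have hrk : r k ≥ ((m : ℝ) + 1) * c := by
        rcases (hno k) with h
        push_neg at h
        by_contra hlt
        push_neg at hlt
        exact absurd (h (lt_of_not_ge hk.2)) (not_le.mpr hlt)
      have htri : r k ≤ ‖v k - v l‖ + r l := by
        have : v k - v i = (v k - v l) + (v l - v i) := by abel
        calc r k = ‖(v k - v l) + (v l - v i)‖ := by rw [hr]; rw [← this]
        _ ≤ ‖v k - v l‖ + ‖v l - v i‖ := norm_add_le _ _
        _ = ‖v k - v l‖ + r l := rfl
      have : ‖v l - v k‖ = ‖v k - v l‖ := norm_sub_rev _ _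
      nlinarith [hl.2]
  · push_neg at hgap
    exfalso
    have hch : ∀ m : Fin (n - 1), ∃ k,
        ((m : ℕ) : ℝ) * c < r k ∧ r k < (((m : ℕ) : ℝ) + 1) * c :=
      fun m => hgap m m.2
    choose f hf1 hf2 using hch
    have hub : ∀ m : Fin (n - 1), (((m : ℕ) : ℝ) + 1) * c ≤ ((n : ℝ) - 1) * c := by
      intro m
      have : (m : ℕ) + 2 ≤ n := by have := m.2; omega
      have := (Nat.cast_le (α := ℝ)).mpr this
      push_cast at this
      nlinarith
    have finj : Function.Injective f := by
      intro a b hab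
      by_contra hne
      have hne' : (a : ℕ) ≠ (b : ℕ) := fun h => hne (Fin.ext h)
      rcases Nat.lt_or_ge (a : ℕ) (b : ℕ) with h | h
      · have h1 : (((a : ℕ) : ℝ) + 1) ≤ ((b : ℕ) : ℝ) := by exact_mod_cast h
        have h2 := hf2 a
        have h3 := hf1 b
        rw [← hab] at h3
        nlinarith
      · have h' : (b : ℕ) < (a : ℕ) := lt_of_le_of_ne h (Ne.symm hne')
        have h1 : (((b : ℕ) : ℝ) + 1) ≤ ((a : ℕ) : ℝ) := by exact_mod_cast h'
        have h2 := hf2 b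
        have h3 := hf1 a
        rw [hab] at h3
        nlinarith
    have hjim : j ∉ Finset.univ.image f := by
      intro hmem
      obtain ⟨m, -, h⟩ := Finset.mem_image.mp hmem
      have h2 := hf2 m
      rw [h] at h2
      have := hub m
      nlinarith
    have hiim : i ∉ Finset.univ.image f := by
      intro hmem
      obtain ⟨m, -, h⟩ := Finset.mem_image.mp hmem
      have h2 := hf1 m
      rw [h, hri] at h2
      have h3 : (0:ℝ) ≤ ((m : ℕ) : ℝ) * c := by positivity
      linarith
    have hij' : i ≠ j := by
      intro h
      rw [← h, hri] at hrj
      nlinarith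
    have hcard : (insert i (insert j (Finset.univ.image f))).card = n + 1 := by
      rw [Finset.card_insert_of_notMem (by simp [hiim, hij']),
        Finset.card_insert_of_notMem hjim,
        Finset.card_image_of_injective _ finj]
      simp only [Finset.card_univ, Fintype.card_fin]
      omega
    have := Finset.card_le_univ (insert i (insert j (Finset.univ.image f)))
    rw [hcard] at this
    simp at this
end

section
/- Define K(2) = 1 and suppose K(n) ≤ 4K(n−1) + 72n^{3/2}·max(34n³/δ, log(5n)·K(n−1)) for all n ≥ 3, where 0 < δ < 1. Then K(n) ≤ 73^n·(n!)^{3/2}·(log(5n))^n·δ^{-1} for all n ≥ 2. -/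
/-!
Induction on `n`. Writing `B n = 73 ^ n (n!) ^ (3/2) (log 5n) ^ n` and `L = log (5(n+1)) ≥ 2`,
the polynomial term is negligible: `34 (n+1)³ ≤ 2 · 146 ^ n ≤ L · B n`, so the maximum in the
recursion is at most `L · B n / δ`. Then `4 + 72 (n+1)^(3/2) L ≤ 73 (n+1)^(3/2) L`, and
`73 (n+1)^(3/2) L ≤ B (n+1) / B n` because `log` is increasing.
-/

open Real

/-- `φ(n) = recursionBound n / δ` in the paper's notation. -/
noncomputable def recursionBound (n : ℕ) : ℝ :=
  73 ^ n * (n.factorial : ℝ) ^ ((3 : ℝ) / 2) * log (5 * n) ^ n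

lemma two_le_log_five_mul {x : ℝ} (hx : 2 ≤ x) : 2 ≤ log (5 * x) := by
  have exp_two_le : exp 2 ≤ 10 := by
    have := exp_one_lt_d9
    calc exp 2 = exp 1 * exp 1 := by rw [← exp_add]; norm_num
      _ ≤ 10 := by nlinarith [exp_pos 1]
  rw [le_log_iff_exp_le (by linarith)]
  linarith

lemma log_five_mul_natCast_nonneg (n : ℕ) : 0 ≤ log (5 * n) := by
  exact_mod_cast log_natCast_nonneg (5 * n)

lemma thirtyfour_mul_succ_pow_three_le (n : ℕ) (hn : 1 ≤ n) : 34 * (n + 1) ^ 3 ≤ 2 * 146 ^ n := by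
  induction n, hn using Nat.le_induction with
  | base => norm_num
  | succ n hn ih =>
    have : (n + 1 + 1) ^ 3 ≤ 8 * (n + 1) ^ 3 := by
      calc (n + 1 + 1) ^ 3 ≤ (2 * (n + 1)) ^ 3 := Nat.pow_le_pow_left (by omega) 3
        _ = 8 * (n + 1) ^ 3 := by ring
    rw [pow_succ 146]
    omega

lemma pow_le_recursionBound (n : ℕ) (hn : 2 ≤ n) : (146 : ℝ) ^ n ≤ recursionBound n := by
  have hfact : 1 ≤ (n.factorial : ℝ) ^ ((3 : ℝ) / 2) :=
    one_le_rpow (by exact_mod_cast n.factorial_pos) (by norm_num)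
  have hlog : (2 : ℝ) ^ n ≤ log (5 * n) ^ n :=
    pow_le_pow_left₀ (by norm_num) (two_le_log_five_mul (by exact_mod_cast hn)) n
  calc (146 : ℝ) ^ n = 73 ^ n * 1 * 2 ^ n := by rw [mul_one, ← mul_pow]; norm_num
    _ ≤ recursionBound n := by unfold recursionBound; gcongr

lemma mul_recursionBound_le_succ (n : ℕ) :
    73 * ((n + 1 : ℕ) : ℝ) ^ ((3 : ℝ) / 2) * log (5 * (n + 1 : ℕ)) * recursionBound n ≤
      recursionBound (n + 1) := by
  have hlog : log (5 * n) ≤ log (5 * (n + 1 : ℕ)) := by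
    rcases n.eq_zero_or_pos with rfl | hn
    · simpa using log_five_mul_natCast_nonneg 1
    · exact log_le_log (by positivity) (by push_cast; linarith)
  have hpow := pow_le_pow_left₀ (log_five_mul_natCast_nonneg n) hlog n
  have hfact : ((n + 1).factorial : ℝ) ^ ((3 : ℝ) / 2) =
      ((n + 1 : ℕ) : ℝ) ^ ((3 : ℝ) / 2) * (n.factorial : ℝ) ^ ((3 : ℝ) / 2) := by
    rw [Nat.factorial_succ, Nat.cast_mul, mul_rpow (by positivity) (by positivity)]
  have := log_five_mul_natCast_nonneg (n + 1)
  unfold recursionBound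
  rw [hfact, pow_succ, pow_succ]
  calc 73 * ((n + 1 : ℕ) : ℝ) ^ ((3 : ℝ) / 2) * log (5 * (n + 1 : ℕ)) *
        (73 ^ n * (n.factorial : ℝ) ^ ((3 : ℝ) / 2) * log (5 * n) ^ n)
      ≤ 73 * ((n + 1 : ℕ) : ℝ) ^ ((3 : ℝ) / 2) * log (5 * (n + 1 : ℕ)) *
        (73 ^ n * (n.factorial : ℝ) ^ ((3 : ℝ) / 2) * log (5 * (n + 1 : ℕ)) ^ n) := by gcongr
    _ = _ := by ring

lemma le_recursionBound_succ_div {δ : ℝ} (hδ0 : 0 < δ) {a b : ℝ} (n : ℕ) (hn : 2 ≤ n)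
    (hb : b ≤ 4 * a + 72 * ((n + 1 : ℕ) : ℝ) ^ ((3 : ℝ) / 2) *
      max (34 * ((n + 1 : ℕ) : ℝ) ^ 3 / δ) (log (5 * (n + 1 : ℕ)) * a))
    (ha : a ≤ recursionBound n / δ) :
    b ≤ recursionBound (n + 1) / δ := by
  set X := ((n + 1 : ℕ) : ℝ) ^ ((3 : ℝ) / 2)
  set L := log (5 * (n + 1 : ℕ))
  set P := recursionBound n / δ
  have hn' : (2 : ℝ) ≤ n := by exact_mod_cast hn
  have hL : 2 ≤ L := two_le_log_five_mul (by push_cast; linarith)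
  have hX : 2 ≤ X := by
    calc (2 : ℝ) ≤ ((n + 1 : ℕ) : ℝ) := by push_cast; linarith
      _ ≤ X := self_le_rpow_of_one_le (by push_cast; linarith) (by norm_num)
  have hcube : 34 * ((n + 1 : ℕ) : ℝ) ^ 3 ≤ L * recursionBound n := by
    calc 34 * ((n + 1 : ℕ) : ℝ) ^ 3 ≤ 2 * 146 ^ n := by
          exact_mod_cast thirtyfour_mul_succ_pow_three_le n (by omega)
      _ ≤ L * recursionBound n := mul_le_mul hL (pow_le_recursionBound n hn) (by positivity)
          (by linarith)
  have hmax : max (34 * ((n + 1 : ℕ) : ℝ) ^ 3 / δ) (L * a) ≤ L * P := by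
    refine max_le ?_ (mul_le_mul_of_nonneg_left ha (by linarith))
    rw [mul_div_assoc']
    exact div_le_div_of_nonneg_right hcube hδ0.le
  have hP : 0 ≤ P :=
    div_nonneg ((pow_pos (by norm_num) n).le.trans (pow_le_recursionBound n hn)) hδ0.le
  calc b ≤ 4 * P + 72 * X * (L * P) := by nlinarith
    _ ≤ 73 * X * L * recursionBound n / δ := by
        rw [mul_div_assoc]
        nlinarith [mul_le_mul hX hL (by norm_num) (by linarith)]
    _ ≤ recursionBound (n + 1) / δ :=
        div_le_div_of_nonneg_right (mul_recursionBound_le_succ n) hδ0.le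

theorem collision_count_recursion_bound (δ : ℝ) (hδ0 : 0 < δ) (hδ1 : δ < 1)
    (K : ℕ → ℝ) (hK2 : K 2 = 1)
    (hrec : ∀ n : ℕ, 3 ≤ n →
      K n ≤ 4 * K (n - 1) +
        72 * (n : ℝ) ^ ((3 : ℝ) / 2) *
          max (34 * (n : ℝ) ^ 3 / δ) (Real.log (5 * n) * K (n - 1))) :
    ∀ n : ℕ, 2 ≤ n →
      K n ≤ 73 ^ n * ((n.factorial : ℝ)) ^ ((3 : ℝ) / 2) * (Real.log (5 * n)) ^ n / δ := by
  change ∀ n, 2 ≤ n → K n ≤ recursionBound n / δ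
  refine Nat.le_induction ?_ fun n hn ih => ?_
  · rw [hK2, le_div_iff₀ hδ0, one_mul]
    linarith [pow_le_recursionBound 2 le_rfl]
  · have := hrec (n + 1) (by omega)
    rw [Nat.add_sub_cancel] at this
    exact le_recursionBound_succ_div hδ0 n hn this ih
end
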